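/- Let A ⊆ B be a regular C*-inclusion and E : B → A an almost faithful conditional expectation such that E(M) ⊆ M for every slice M ⊆ B. Then E is faithful. -/

import Mathlib

open scoped MultiplierAlgebra

noncomputable section

namespace NCCartan

variable {B : Type*} [NonUnitalCStarAlgebra B] [PartialOrder B] [StarOrderedRing B]

/-- A closed two-sided ideal of the C*-subalgebra of `B` with carrier `A`. -/
structure CIdealIn (A : Set B) where
  carrier : Set B
  subset : carrier ⊆ A
  zero_mem : (0 : B) ∈ carrier
  add_mem : ∀ x ∈ carrier, ∀ y ∈ carrier, x + y ∈ carrier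
  smul_mem : ∀ (c : ℂ), ∀ x ∈ carrier, c • x ∈ carrier
  mul_left : ∀ a ∈ A, ∀ x ∈ carrier, a * x ∈ carrier
  mul_right : ∀ a ∈ A, ∀ x ∈ carrier, x * a ∈ carrier
  isClosed : IsClosed carrier

/-- The inclusion `A ⊆ B` is non-degenerate: the closed linear span of `A·B` is all of `B`. -/
def Nondegenerate (A : Set B) : Prop :=
  Dense ((Submodule.span ℂ {x : B | ∃ a ∈ A, ∃ b : B, x = a * b} : Submodule ℂ B) : Set B)

/-- `b` is a normaliser of `A` in `B`. -/
def IsNormalizerOf (A : Set B) (b : B) : Prop :=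
  (∀ a ∈ A, b * a * star b ∈ A) ∧ (∀ a ∈ A, star b * a * b ∈ A)

/-- The inclusion `A ⊆ B` is regular: it is non-degenerate and the linear span of the
normalisers is dense in `B`. -/
def RegularInclusion (A : Set B) : Prop :=
  Nondegenerate A ∧
    Dense ((Submodule.span ℂ {b : B | IsNormalizerOf A b} : Submodule ℂ B) : Set B)

/-- A conditional expectation from `B` onto the C*-subalgebra with carrier `A`. -/
structure CondExp (A : Set B) where
  toFun : B →ₗ[ℂ] B
  mem_range : ∀ b : B, toFun b ∈ A
  fixes : ∀ a ∈ A, toFun a = a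
  contractive : ∀ b : B, ‖toFun b‖ ≤ ‖b‖
  positive : ∀ b : B, 0 ≤ b → 0 ≤ toFun b
  bimodule : ∀ a ∈ A, ∀ c ∈ A, ∀ b : B, toFun (a * b * c) = a * toFun b * c

/-- `E` is faithful: `E(b* b) = 0` implies `b = 0`. -/
def CondExp.Faithful {A : Set B} (E : CondExp A) : Prop :=
  ∀ b : B, E.toFun (star b * b) = 0 → b = 0

/-- `E` is almost faithful: `E((b c)* (b c)) = 0` for all `c` implies `b = 0`. -/
def CondExp.AlmostFaithful {A : Set B} (E : CondExp A) : Prop :=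
  ∀ b : B, (∀ c : B, E.toFun (star (b * c) * (b * c)) = 0) → b = 0

/-- The set `IBI`: the closed linear span of `{x b y : x, y ∈ I, b ∈ B}`. -/
def IBISet (I : Set B) : Set B :=
  closure ((Submodule.span ℂ {z : B | ∃ p ∈ I, ∃ b : B, ∃ q ∈ I, z = p * b * q} :
    Submodule ℂ B) : Set B)

/-- A conditional expectation from the C*-subalgebra of `B` with carrier `C` onto the
ideal with carrier `I ⊆ C`; only the values of `toFun` on `C` are relevant. -/
structure CondExpOnSub (C : Set B) (I : Set B) where
  toFun : B → B
  map_add : ∀ x ∈ C, ∀ y ∈ C, toFun (x + y) = toFun x + toFun y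
  map_smul : ∀ (c : ℂ), ∀ x ∈ C, toFun (c • x) = c • toFun x
  mem_range : ∀ x ∈ C, toFun x ∈ I
  fixes : ∀ x ∈ I, toFun x = x
  contractive : ∀ x ∈ C, ‖toFun x‖ ≤ ‖x‖
  positive : ∀ x ∈ C, 0 ≤ x → 0 ≤ toFun x
  bimodule : ∀ p ∈ I, ∀ q ∈ I, ∀ b ∈ C, toFun (p * b * q) = p * toFun b * q

def CondExpOnSub.Faithful {C I : Set B} (P : CondExpOnSub C I) : Prop :=
  ∀ x ∈ C, P.toFun (star x * x) = 0 → x = 0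

def CondExpOnSub.AlmostFaithful {C I : Set B} (P : CondExpOnSub C I) : Prop :=
  ∀ x ∈ C, (∀ c ∈ C, P.toFun (star (x * c) * (x * c)) = 0) → x = 0

/-- A virtual commutant of `A` in `B` defined on the ideal with carrier `I`;
only the values of `toFun` on `I` are relevant. -/
structure VirtualCommutant (A : Set B) (I : Set B) where
  toFun : B → B
  map_add : ∀ x ∈ I, ∀ y ∈ I, toFun (x + y) = toFun x + toFun y
  map_smul : ∀ (c : ℂ), ∀ x ∈ I, toFun (c • x) = c • toFun x
  left_mod : ∀ a ∈ A, ∀ x ∈ I, toFun (a * x) = a * toFun x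
  right_mod : ∀ a ∈ A, ∀ x ∈ I, toFun (x * a) = toFun x * a

/-- A slice for the inclusion `A ⊆ B`: a closed linear subspace `M` with `A·M ⊆ M`,
`M·A ⊆ M`, `M*·M ⊆ A` and `M·M* ⊆ A`. -/
structure IsSlice (A : Set B) (M : Submodule ℂ B) : Prop where
  isClosed : IsClosed (M : Set B)
  mul_left : ∀ a ∈ A, ∀ m ∈ M, a * m ∈ M
  mul_right : ∀ a ∈ A, ∀ m ∈ M, m * a ∈ M
  star_mul_mem : ∀ m ∈ M, ∀ n ∈ M, star m * n ∈ A
  mul_star_mem : ∀ m ∈ M, ∀ n ∈ M, m * star n ∈ A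

/-- An isomorphism of Hilbert `A`-bimodules from the ideal with carrier `I` onto the
subset `M` of `B`; only the values of `toFun` on `I` are relevant. -/
structure HilbertBimoduleIso (A : Set B) (I : Set B) (M : Set B) where
  toFun : B → B
  map_add : ∀ x ∈ I, ∀ y ∈ I, toFun (x + y) = toFun x + toFun y
  map_smul : ∀ (c : ℂ), ∀ x ∈ I, toFun (c • x) = c • toFun x
  maps_into : ∀ x ∈ I, toFun x ∈ M
  injOn : ∀ x ∈ I, ∀ y ∈ I, toFun x = toFun y → x = y
  surjOn : ∀ m ∈ M, ∃ x ∈ I, toFun x = m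
  bimod : ∀ a ∈ A, ∀ b ∈ A, ∀ x ∈ I, toFun (a * x * b) = a * toFun x * b
  inner_right : ∀ x ∈ I, ∀ y ∈ I, star (toFun x) * toFun y = star x * y
  inner_left : ∀ x ∈ I, ∀ y ∈ I, toFun x * star (toFun y) = x * star y

/-- A hereditary C*-subalgebra `D` of the C*-subalgebra with carrier `A`. -/
structure IsHereditarySubalgebra (A : Set B) (D : Set B) : Prop where
  subset : D ⊆ A
  zero_mem : (0 : B) ∈ D
  add_mem : ∀ x ∈ D, ∀ y ∈ D, x + y ∈ D
  smul_mem : ∀ (c : ℂ), ∀ x ∈ D, c • x ∈ D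
  mul_mem : ∀ x ∈ D, ∀ y ∈ D, x * y ∈ D
  star_mem : ∀ x ∈ D, star x ∈ D
  isClosed : IsClosed D
  hereditary : ∀ x ∈ A, ∀ a ∈ D, 0 ≤ x → x ≤ a → x ∈ D

/-- Kishimoto's condition for an element `y ∈ B` relative to `A`. -/
def Kishimoto (A : Set B) (y : B) : Prop :=
  ∀ D : Set B, IsHereditarySubalgebra A D → D ≠ {0} → ∀ ε : ℝ, 0 < ε →
    ∃ a ∈ D, 0 ≤ a ∧ ‖a‖ = 1 ∧ ‖a * y * a‖ < ε

/-- The inclusion `A ⊆ B` is aperiodic. -/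
def AperiodicInclusion (A : Set B) : Prop :=
  ∀ b : B, ∀ D : Set B, IsHereditarySubalgebra A D → D ≠ {0} → ∀ ε : ℝ, 0 < ε →
    ∃ a ∈ D, 0 ≤ a ∧ ‖a‖ = 1 ∧ Metric.infDist (a * b * a) A < ε

/-- Every virtual commutant of `A` in `B` has range contained in `A`. -/
def VirtualCommutantsTrivial (A : Set B) : Prop :=
  ∀ I : CIdealIn A, ∀ φ : VirtualCommutant A I.carrier, ∀ x ∈ I.carrier, φ.toFun x ∈ A

/-- For every closed two-sided ideal `I` of `A`, every multiplier of `IBI` commuting with `I`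
maps `I` into `I`. -/
def CommutingMultipliersTrivial (A : Set B) : Prop :=
  ∀ I : CIdealIn A, ∀ C : NonUnitalStarSubalgebra ℂ B, (C : Set B) = IBISet I.carrier →
    ∀ τ : 𝓜(ℂ, C), (∀ x : C, (x : B) ∈ I.carrier → τ.fst x = τ.snd x) →
      ∀ x : C, (x : B) ∈ I.carrier → ((τ.fst x : C) : B) ∈ I.carrier

/-- Every slice isomorphic as a Hilbert `A`-bimodule to a closed two-sided ideal `I` of `A`
equals `I`. -/
def SlicesIsoIdealsTrivial (A : Set B) : Prop :=
  ∀ I : CIdealIn A, ∀ M : Submodule ℂ B, IsSlice A M →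
    Nonempty (HilbertBimoduleIso A I.carrier (M : Set B)) → (M : Set B) = I.carrier

/-- `E` is faithful and, for every closed two-sided ideal `I` of `A`, the restriction of `E`
to `IBI` is the only conditional expectation from `IBI` onto `I`. -/
def UniqueExpectationOnIdeals (A : Set B) (E : CondExp A) : Prop :=
  E.Faithful ∧ ∀ I : CIdealIn A,
    (∃ P : CondExpOnSub (IBISet I.carrier) I.carrier,
      ∀ x ∈ IBISet I.carrier, P.toFun x = E.toFun x) ∧
    (∀ P : CondExpOnSub (IBISet I.carrier) I.carrier,
      ∀ x ∈ IBISet I.carrier, P.toFun x = E.toFun x)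

/-- For every closed two-sided ideal `I` of `A` there is exactly one faithful conditional
expectation from `IBI` onto `I`. -/
def UniqueFaithfulExpectationOnIdeals (A : Set B) : Prop :=
  ∀ I : CIdealIn A,
    ∃ P : CondExpOnSub (IBISet I.carrier) I.carrier, P.Faithful ∧
      ∀ Q : CondExpOnSub (IBISet I.carrier) I.carrier, Q.Faithful →
        ∀ x ∈ IBISet I.carrier, Q.toFun x = P.toFun x

/-- `A ⊆ B` is a noncommutative Cartan subalgebra in the sense of Exel. -/
def IsNCCartan (A : Set B) : Prop :=
  RegularInclusion A ∧ (∃ E : CondExp A, E.AlmostFaithful) ∧ VirtualCommutantsTrivial A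

/-- `A` detects ideals in `B`. -/
def DetectsIdeals (A : Set B) : Prop :=
  ∀ J : CIdealIn (Set.univ : Set B), J.carrier ≠ {0} → J.carrier ∩ A ≠ {0}

/-- `A` supports `B`. -/
def Supports (A : Set B) : Prop :=
  ∀ b : B, 0 ≤ b → b ≠ 0 → ∃ a ∈ A, 0 ≤ a ∧ a ≠ 0 ∧
    ∀ ε : ℝ, 0 < ε → ∃ x : B, ‖star x * b * x - a‖ < ε

/-- The C*-algebra with carrier `A` is prime: any two nonzero closed two-sided ideals have
nonzero intersection. -/
def IsPrimeCStarSet (A : Set B) : Prop :=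
  ∀ I J : CIdealIn A, I.carrier ≠ {0} → J.carrier ≠ {0} → I.carrier ∩ J.carrier ≠ {0}

end NCCartan

/-! By almost faithfulness it suffices to show that `b * c` lies in the left kernel
`{x | E (x⋆x) = 0}` of `E` (a closed subspace) whenever `E (b⋆b) = 0`, and by regularity only
for normalisers `c = n`. This follows from the covariance `E (n⋆ y n) = n⋆ E(y) n`, which by
continuity only has to be checked for a normaliser `y = ν`. Write `ν = d + E ν`, where `d` lies in
the slice generated by `ν` and `E d = 0`. Then `n⋆ d n` lies in a slice `W`, which `E` preserves, so
`r = E (n⋆ d n) ∈ W ∩ A`. The relations `W W⋆, W⋆ W ⊆ A` and the bimodularity of `E` give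
`n r r⋆ n⋆ = (n n⋆) d (n r⋆ n⋆) ∈ A ∩ ker E`, so `n r = 0`, and then `r⋆ r = (n r)⋆ d n = 0`.
One-sided bimodularity of `E` and `n n⋆ ∈ A` come from an approximate unit of `A`, which by
non-degeneracy is also one for `B`. -/

open Filter Topology

theorem Submodule.map_mem_of_mem_topologicalClosure_span {R E F S : Type*} [Semiring R]
    [AddCommMonoid E] [TopologicalSpace E] [Module R E] [ContinuousAdd E]
    [ContinuousConstSMul R E] [AddCommMonoid F] [TopologicalSpace F] [Module R F] [SetLike S F]
    [AddSubmonoidClass S F] [SMulMemClass S R F] (f : E →L[R] F) {G : Set E} {s : S}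
    (hs : IsClosed (s : Set F)) (hG : ∀ g ∈ G, f g ∈ s) {x : E}
    (hx : x ∈ (Submodule.span R G).topologicalClosure) : f x ∈ s :=
  Submodule.topologicalClosure_minimal (t := (Submodule.ofClass s).comap (f : E →ₗ[R] F)) _
    (Submodule.span_le.2 hG) (hs.preimage f.continuous) hx

namespace NCCartan

namespace Nondegenerate

variable {B : Type*} [NonUnitalCStarAlgebra B]
  {A : NonUnitalStarSubalgebra ℂ B} [IsClosed (A : Set B)]

/-- Multiplying by an approximate unit of `A` converges pointwise on `A·B`, hence, being
uniformly bounded, on its closed span `B`. -/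
theorem mem_closure_image_mul_left (hnd : Nondegenerate (A : Set B)) (v : B) :
    v ∈ closure ((· * v) '' (A : Set B)) := by
  let _ := CStarAlgebra.spectralOrder A
  have := CStarAlgebra.spectralOrderedRing A
  have hl := CStarAlgebra.increasingApproximateUnit A
  let T : Submodule ℂ B :=
    { carrier := {v | Tendsto (fun e : A => (e : B) * v) (CStarAlgebra.approximateUnit A) (𝓝 v)}
      add_mem' := fun hu hv => by simpa only [Set.mem_ofPred_eq, mul_add] using hu.add hv
      zero_mem' := by simpa only [Set.mem_ofPred_eq, mul_zero] using tendsto_const_nhds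
      smul_mem' := fun c v hv => by
        simpa only [Set.mem_ofPred_eq, mul_smul_comm] using hv.const_smul c }
  have hspan : Submodule.span ℂ {x : B | ∃ a ∈ (A : Set B), ∃ b : B, x = a * b} ≤ T := by
    rw [Submodule.span_le]
    rintro _ ⟨a, ha, b, rfl⟩
    have := ((continuous_subtype_val.tendsto _).comp (hl.tendsto_mul_right ⟨a, ha⟩)).mul_const b
    show Tendsto (fun e : A => (e : B) * (a * b)) _ _
    simpa only [Function.comp_def, MulMemClass.coe_mul, mul_assoc] using this
  have hT : IsClosed (T : Set B) := by
    refine isClosed_of_closure_subset fun v hv => Metric.tendsto_nhds.2 fun ε hε => ?_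
    obtain ⟨w, hwT, hvw⟩ := Metric.mem_closure_iff.1 hv (ε / 3) (by positivity)
    filter_upwards [hl.eventually_norm, Metric.tendsto_nhds.1 hwT (ε / 3) (by positivity)]
      with e he hew
    have hev : dist ((e : B) * v) (e * w) ≤ dist v w := by
      rw [dist_eq_norm, dist_eq_norm, ← mul_sub]
      exact (norm_mul_le _ _).trans (mul_le_of_le_one_left (norm_nonneg _) he)
    calc dist ((e : B) * v) v ≤ dist ((e : B) * v) (e * w) + dist ((e : B) * w) w + dist w v :=
          dist_triangle4 _ _ _ _
      _ < ε := by rw [dist_comm w v]; linarith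
  exact mem_closure_of_tendsto (closure_minimal hspan hT (hnd v))
    (Eventually.of_forall fun e => ⟨e, e.2, rfl⟩)

theorem mem_closure_image_mul_right (hnd : Nondegenerate (A : Set B)) (v : B) :
    v ∈ closure ((v * ·) '' (A : Set B)) := by
  refine star_star v ▸ map_mem_closure continuous_star (hnd.mem_closure_image_mul_left (star v)) ?_
  rintro _ ⟨a, ha, rfl⟩
  exact ⟨star a, star_mem ha, by simp only [star_mul, star_star]⟩

theorem mem_of_forall_mul_mul_mem (hnd : Nondegenerate (A : Set B)) {S : Set B}
    (hS : IsClosed S) {v : B} (h : ∀ a ∈ A, ∀ a' ∈ A, a * v * a' ∈ S) : v ∈ S := by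
  refine closure_minimal ?_ hS (hnd.mem_closure_image_mul_right v)
  rintro _ ⟨a', ha', rfl⟩
  refine closure_minimal ?_ hS (hnd.mem_closure_image_mul_left (v * a'))
  rintro _ ⟨a, ha, rfl⟩
  simpa only [mul_assoc] using h a ha a' ha'

theorem mul_star_mem_of_isNormalizerOf (hnd : Nondegenerate (A : Set B)) {n : B}
    (hn : IsNormalizerOf (A : Set B) n) : n * star n ∈ A := by
  refine hnd.mem_of_forall_mul_mul_mem (S := {y | n * y ∈ A})
    (IsClosed.preimage (continuous_const_mul n) ‹_›) fun a ha a' ha' => ?_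
  simpa only [Set.mem_ofPred_eq, ← mul_assoc] using mul_mem (hn.1 a ha) ha'

end Nondegenerate

section Slices

variable {B : Type*} [NonUnitalCStarAlgebra B] (A : NonUnitalStarSubalgebra ℂ B)

def sliceGenerators (X : Set B) : Set B :=
  {z | ∃ a ∈ A, ∃ x ∈ X, ∃ a' ∈ A, z = a * x * a'}

def sliceSpan (X : Set B) : Submodule ℂ B :=
  (Submodule.span ℂ (sliceGenerators A X)).topologicalClosure

variable {A} [IsClosed (A : Set B)] {X : Set B}

theorem subset_sliceSpan (hnd : Nondegenerate (A : Set B)) : X ⊆ sliceSpan A X :=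
  fun x hx => hnd.mem_of_forall_mul_mul_mem (Submodule.isClosed_topologicalClosure _)
    fun a ha a' ha' => Submodule.le_topologicalClosure _ <|
      Submodule.subset_span ⟨a, ha, x, hx, a', ha', rfl⟩

theorem star_mul_mem_of_mem_sliceGenerators
    (hX : ∀ x ∈ X, ∀ a ∈ A, ∀ y ∈ X, star x * a * y ∈ A) {g m : B}
    (hg : g ∈ sliceGenerators A X) (hm : m ∈ sliceSpan A X) : star g * m ∈ A := by
  obtain ⟨a₁, h₁, x, hx, a₂, h₂, rfl⟩ := hg
  refine Submodule.map_mem_of_mem_topologicalClosure_span (ContinuousLinearMap.mul ℂ B _) ‹_› ?_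
    hm
  rintro _ ⟨a₃, h₃, y, hy, a₄, h₄, rfl⟩
  have : star (a₁ * x * a₂) * (a₃ * y * a₄) = star a₂ * (star x * (star a₁ * a₃) * y) * a₄ := by
    simp only [star_mul, mul_assoc]
  simpa only [ContinuousLinearMap.mul_apply', this] using
    mul_mem (mul_mem (star_mem h₂) (hX x hx _ (mul_mem (star_mem h₁) h₃) y hy)) h₄

theorem mul_star_mem_of_mem_sliceGenerators
    (hX : ∀ x ∈ X, ∀ a ∈ A, ∀ y ∈ X, x * a * star y ∈ A) {g m : B}
    (hg : g ∈ sliceGenerators A X) (hm : m ∈ sliceSpan A X) : m * star g ∈ A := by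
  obtain ⟨a₃, h₃, y, hy, a₄, h₄, rfl⟩ := hg
  refine Submodule.map_mem_of_mem_topologicalClosure_span ((ContinuousLinearMap.mul ℂ B).flip _)
    ‹_› ?_ hm
  rintro _ ⟨a₁, h₁, x, hx, a₂, h₂, rfl⟩
  have : (a₁ * x * a₂) * star (a₃ * y * a₄) = a₁ * (x * (a₂ * star a₄) * star y) * star a₃ := by
    simp only [star_mul, mul_assoc]
  simpa only [ContinuousLinearMap.flip_apply, ContinuousLinearMap.mul_apply', this] using
    mul_mem (mul_mem h₁ (hX x hx _ (mul_mem h₂ (star_mem h₄)) y hy)) (star_mem h₃)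

theorem isSlice_sliceSpan (hstar_mul : ∀ x ∈ X, ∀ a ∈ A, ∀ y ∈ X, star x * a * y ∈ A)
    (hmul_star : ∀ x ∈ X, ∀ a ∈ A, ∀ y ∈ X, x * a * star y ∈ A) :
    IsSlice (A : Set B) (sliceSpan A X) := by
  have hM := Submodule.isClosed_topologicalClosure (Submodule.span ℂ (sliceGenerators A X))
  refine ⟨hM, fun a ha m hm => ?_, fun a ha m hm => ?_, fun m hm n hn => ?_, fun m hm n hn => ?_⟩
  · refine Submodule.map_mem_of_mem_topologicalClosure_span (ContinuousLinearMap.mul ℂ B a) hM ?_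
      hm
    rintro _ ⟨a₁, h₁, x, hx, a₂, h₂, rfl⟩
    exact Submodule.le_topologicalClosure _ <| Submodule.subset_span ⟨a * a₁, mul_mem ha h₁, x, hx,
      a₂, h₂, by simp only [ContinuousLinearMap.mul_apply', mul_assoc]⟩
  · refine Submodule.map_mem_of_mem_topologicalClosure_span ((ContinuousLinearMap.mul ℂ B).flip a)
      hM ?_ hm
    rintro _ ⟨a₁, h₁, x, hx, a₂, h₂, rfl⟩
    exact Submodule.le_topologicalClosure _ <| Submodule.subset_span ⟨a₁, h₁, x, hx, a₂ * a,
      mul_mem h₂ ha, by simp only [ContinuousLinearMap.flip_apply,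
        ContinuousLinearMap.mul_apply', mul_assoc]⟩
  · rw [← star_star (star m * n), star_mul, star_star]
    refine star_mem (Submodule.map_mem_of_mem_topologicalClosure_span
      (ContinuousLinearMap.mul ℂ B _) ‹_› (fun g hg => ?_) hm)
    simpa only [ContinuousLinearMap.mul_apply', star_mul, star_star] using
      star_mem (star_mul_mem_of_mem_sliceGenerators hstar_mul hg hn)
  · rw [← star_star (m * star n), star_mul, star_star]
    refine star_mem (Submodule.map_mem_of_mem_topologicalClosure_span
      ((ContinuousLinearMap.mul ℂ B).flip _) ‹_› (fun g hg => ?_) hn)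
    simpa only [ContinuousLinearMap.flip_apply, ContinuousLinearMap.mul_apply', star_mul,
      star_star] using star_mem (mul_star_mem_of_mem_sliceGenerators hmul_star hg hm)

theorem isSlice_sliceSpan_singleton {ν : B} (hν : IsNormalizerOf (A : Set B) ν) :
    IsSlice (A : Set B) (sliceSpan A {ν}) := by
  refine isSlice_sliceSpan ?_ ?_ <;> rintro x rfl a ha y rfl
  · exact hν.2 a ha
  · exact hν.1 a ha

theorem isSlice_sliceSpan_star_mul_mul {n : B} (hn : IsNormalizerOf (A : Set B) n)
    {M : Submodule ℂ B} (hM : IsSlice (A : Set B) M) :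
    IsSlice (A : Set B) (sliceSpan A ((fun d => star n * d * n) '' M)) := by
  refine isSlice_sliceSpan ?_ ?_ <;> rintro _ ⟨d, hd, rfl⟩ a ha _ ⟨e, he, rfl⟩
  · have : star (star n * d * n) * a * (star n * e * n) =
        star n * (star d * (n * a * star n * e)) * n := by
      simp only [star_mul, star_star, mul_assoc]
    rw [this]
    exact hn.2 _ (hM.star_mul_mem d hd _ (hM.mul_left _ (hn.1 a ha) e he))
  · have : star n * d * n * a * star (star n * e * n) =
        star n * (d * (n * a * star n) * star e) * n := by
      simp only [star_mul, star_star, mul_assoc]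
    rw [this]
    exact hn.2 _ (hM.mul_star_mem _ (hM.mul_right _ (hn.1 a ha) d hd) e he)

end Slices

namespace CondExp

variable {B : Type*} [NonUnitalCStarAlgebra B] [PartialOrder B]
  {A : NonUnitalStarSubalgebra ℂ B} (E : CondExp (A : Set B))

def toContinuousLinearMap : B →L[ℂ] B :=
  E.toFun.mkContinuous 1 fun b => by simpa only [one_mul] using E.contractive b

def PreservesSlices : Prop :=
  ∀ M : Submodule ℂ B, IsSlice (A : Set B) M → ∀ m ∈ M, E.toFun m ∈ M

theorem continuous : Continuous E.toFun :=
  E.toContinuousLinearMap.continuous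

theorem map_star_add_mul_add_eq_zero [StarOrderedRing B] {u v : B}
    (hu : E.toFun (star u * u) = 0) (hv : E.toFun (star v * v) = 0) :
    E.toFun (star (u + v) * (u + v)) = 0 := by
  have expand_add : star (u + v) * (u + v) =
      star u * u + (star u * v + star v * u) + star v * v := by
    simp only [star_add]; noncomm_ring
  have expand_sub : star (u - v) * (u - v) =
      star u * u - (star u * v + star v * u) + star v * v := by
    simp only [star_sub]; noncomm_ring
  have hcross : E.toFun (star u * v + star v * u) = 0 := by
    have hplus := E.positive _ (star_mul_self_nonneg (u + v))
    have hminus := E.positive _ (star_mul_self_nonneg (u - v))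
    rw [expand_add, map_add, map_add, hu, hv, zero_add, add_zero] at hplus
    rw [expand_sub, map_add, map_sub, hu, hv, zero_sub, add_zero, neg_nonneg] at hminus
    exact le_antisymm hminus hplus
  rw [expand_add, map_add, map_add, hu, hv, hcross, add_zero, add_zero]

def leftKernel [StarOrderedRing B] : Submodule ℂ B where
  carrier := {x | E.toFun (star x * x) = 0}
  add_mem' := E.map_star_add_mul_add_eq_zero
  zero_mem' := by simp
  smul_mem' c x hx := by
    simp only [Set.mem_ofPred_eq, star_smul, smul_mul_smul_comm, map_smul] at hx ⊢
    rw [hx, smul_zero]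

theorem isClosed_leftKernel [StarOrderedRing B] : IsClosed (E.leftKernel : Set B) :=
  isClosed_eq (E.continuous.comp (continuous_star.mul continuous_id)) continuous_const

variable [IsClosed (A : Set B)]

theorem map_mul_right (hnd : Nondegenerate (A : Set B)) (v : B) {c : B} (hc : c ∈ A) :
    E.toFun (v * c) = E.toFun v * c := by
  refine hnd.mem_of_forall_mul_mul_mem (S := {v | E.toFun (v * c) = E.toFun v * c})
    (isClosed_eq (E.continuous.comp (continuous_mul_const c)) (E.continuous.mul_const c))
    fun a ha a' ha' => ?_
  simp only [Set.mem_ofPred_eq]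
  rw [mul_assoc _ a', E.bimodule a ha _ (mul_mem ha' hc), E.bimodule a ha a' ha']
  simp only [mul_assoc]

theorem map_mul_left (hnd : Nondegenerate (A : Set B)) (v : B) {c : B} (hc : c ∈ A) :
    E.toFun (c * v) = c * E.toFun v := by
  refine hnd.mem_of_forall_mul_mul_mem (S := {v | E.toFun (c * v) = c * E.toFun v})
    (isClosed_eq (E.continuous.comp (continuous_const_mul c)) (E.continuous.const_mul c))
    fun a ha a' ha' => ?_
  simp only [Set.mem_ofPred_eq]
  rw [← mul_assoc, ← mul_assoc, E.bimodule _ (mul_mem hc ha) a' ha', E.bimodule a ha a' ha']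
  simp only [mul_assoc]

theorem mul_star_map_eq_of_mem_slice (hnd : Nondegenerate (A : Set B)) {W : Submodule ℂ B}
    (hW : IsSlice (A : Set B) W) {w : B} (hw : w ∈ W) (hEw : E.toFun w ∈ W) :
    w * star (E.toFun w) = E.toFun w * star (E.toFun w) := by
  have h := E.fixes _ (hW.mul_star_mem w hw _ hEw)
  rwa [E.map_mul_right hnd w (star_mem (E.mem_range w)), eq_comm] at h

theorem star_map_mul_eq_of_mem_slice (hnd : Nondegenerate (A : Set B)) {W : Submodule ℂ B}
    (hW : IsSlice (A : Set B) W) {w : B} (hw : w ∈ W) (hEw : E.toFun w ∈ W) :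
    star (E.toFun w) * w = star (E.toFun w) * E.toFun w := by
  have h := E.fixes _ (hW.star_mul_mem _ hEw w hw)
  rwa [E.map_mul_left hnd w (star_mem (E.mem_range w)), eq_comm] at h

theorem map_star_mul_mul_eq_zero (hnd : Nondegenerate (A : Set B))
    (hsl : E.PreservesSlices) {n : B} (hn : IsNormalizerOf (A : Set B) n)
    {M : Submodule ℂ B} (hM : IsSlice (A : Set B) M)
    {d : B} (hd : d ∈ M) (hEd : E.toFun d = 0) : E.toFun (star n * d * n) = 0 := by
  set W := sliceSpan A ((fun d => star n * d * n) '' M)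
  have hW : IsSlice (A : Set B) W := isSlice_sliceSpan_star_mul_mul hn hM
  have hw : star n * d * n ∈ W := subset_sliceSpan hnd ⟨d, hd, rfl⟩
  set r := E.toFun (star n * d * n)
  have hrA : r ∈ A := E.mem_range _
  have hrW : r ∈ W := hsl W hW _ hw
  have hnr : n * r = 0 := by
    have key : n * r * star (n * r) = n * star n * d * (n * star r * star n) := by
      calc n * r * star (n * r) = n * (r * star r) * star n := by simp only [star_mul, mul_assoc]
        _ = n * (star n * d * n * star r) * star n := by
          rw [E.mul_star_map_eq_of_mem_slice hnd hW hw hrW]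
        _ = n * star n * d * (n * star r * star n) := by simp only [mul_assoc]
    have hmem : n * r * star (n * r) ∈ A := by
      simpa only [star_mul, mul_assoc, SetLike.mem_coe] using
        hn.1 _ (mul_mem hrA (star_mem hrA))
    rw [← CStarRing.mul_star_self_eq_zero_iff, ← E.fixes _ hmem, key,
      E.bimodule _ (hnd.mul_star_mem_of_isNormalizerOf hn) _ (hn.1 _ (star_mem hrA)), hEd,
      mul_zero, zero_mul]
  rw [← CStarRing.star_mul_self_eq_zero_iff, ← E.star_map_mul_eq_of_mem_slice hnd hW hw hrW,
    ← mul_assoc, ← mul_assoc, ← star_mul, hnr, star_zero, zero_mul, zero_mul]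

theorem map_star_mul_mul_of_isNormalizerOf (hnd : Nondegenerate (A : Set B))
    (hsl : E.PreservesSlices) {n ν : B} (hn : IsNormalizerOf (A : Set B) n)
    (hν : IsNormalizerOf (A : Set B) ν) :
    E.toFun (star n * ν * n) = star n * E.toFun ν * n := by
  have hM := isSlice_sliceSpan_singleton hν
  have hνM : ν ∈ sliceSpan A {ν} := subset_sliceSpan hnd rfl
  have hEν : E.toFun ν ∈ A := E.mem_range ν
  have h0 := E.map_star_mul_mul_eq_zero hnd hsl hn hM (sub_mem hνM (hsl _ hM ν hνM))
    (by rw [map_sub, E.fixes _ hEν, sub_self])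
  calc E.toFun (star n * ν * n)
      = E.toFun (star n * (ν - E.toFun ν) * n) + E.toFun (star n * E.toFun ν * n) := by
        rw [← map_add, ← add_mul, ← mul_add, sub_add_cancel]
    _ = star n * E.toFun ν * n := by rw [h0, zero_add, E.fixes _ (hn.2 _ hEν)]

theorem map_star_mul_mul (hreg : RegularInclusion (A : Set B))
    (hsl : E.PreservesSlices) {n : B} (hn : IsNormalizerOf (A : Set B) n) (y : B) :
    E.toFun (star n * y * n) = star n * E.toFun y * n := by
  have h : E.toContinuousLinearMap ∘L ContinuousLinearMap.mulLeftRight ℂ B (star n) n =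
      ContinuousLinearMap.mulLeftRight ℂ B (star n) n ∘L E.toContinuousLinearMap :=
    ContinuousLinearMap.ext_on hreg.2 fun ν hν =>
      E.map_star_mul_mul_of_isNormalizerOf hreg.1 hsl hn hν
  exact DFunLike.congr_fun h y

end CondExp

end NCCartan

open NCCartan

/-- A slice-preserving almost faithful conditional expectation on a regular inclusion is
faithful. -/
theorem statement_9 {B : Type*} [NonUnitalCStarAlgebra B] [PartialOrder B] [StarOrderedRing B]
    (A : NonUnitalStarSubalgebra ℂ B) [IsClosed (A : Set B)]
    (hreg : RegularInclusion (A : Set B))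
    (E : CondExp (A : Set B)) (haf : E.AlmostFaithful)
    (hsl : ∀ M : Submodule ℂ B, IsSlice (A : Set B) M → ∀ m ∈ M, E.toFun m ∈ M) :
    E.Faithful := by
  intro b hb
  refine haf b fun c => ?_
  have hnormalizers : Submodule.span ℂ {n | IsNormalizerOf (A : Set B) n} ≤
      E.leftKernel.comap (ContinuousLinearMap.mul ℂ B b : B →ₗ[ℂ] B) := by
    rw [Submodule.span_le]
    intro n hn
    show E.toFun (star (b * n) * (b * n)) = 0
    rw [star_mul, mul_assoc, ← mul_assoc (star b), ← mul_assoc, E.map_star_mul_mul hreg hsl hn, hb,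
      mul_zero, zero_mul]
  exact closure_minimal hnormalizers (E.isClosed_leftKernel.preimage (continuous_const_mul b))
    (hreg.2 c)
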